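/- Let F₁,…,F_k be involutions on S and π a strictly positive density. Define recursively α_k(x) = min(1, (π(F_k(x))/π(x)) · ∏_{i=1}^{k−1} (1 − α_i(F_k(x)))/(1 − α_i(x))), assuming all α_i(x) < 1 and α_i(F_k(x)) < 1 for i < k. Then the k-th stage balance condition π(x)·∏_{i=1}^{k−1}(1 − α_i(x))·α_k(x) = π(F_k(x))·∏_{i=1}^{k−1}(1 − α_i(F_k(x)))·α_k(F_k(x)) holds. -/

import Mathlib

/-!
Write `w_k(x) = π(x) ∏_{i<k} (1 - α_i(x))` for the weight with which the chain reaches stage `k`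
at `x`. Since `F_k` is an involution, the defining formula reads `α_k(x) = min 1 (w_k(F_k x) / w_k x)`
and `α_k(F_k x) = min 1 (w_k x / w_k(F_k x))`, so both sides of the balance equation equal
`min (w_k x) (w_k(F_k x))`.
-/

open Finset

section

variable {K : Type*} [Field K] [LinearOrder K] [IsStrictOrderedRing K]

theorem mul_min_one_div_of_pos {a : K} (b : K) (ha : 0 < a) : a * min 1 (b / a) = min a b := by
  rw [mul_min_of_nonneg _ _ ha.le, mul_one, mul_div_cancel₀ _ ha.ne']

theorem mul_min_one_div_comm {a b : K} (ha : 0 < a) (hb : 0 < b) :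
    a * min 1 (b / a) = b * min 1 (a / b) := by
  rw [mul_min_one_div_of_pos b ha, mul_min_one_div_of_pos a hb, min_comm]

end

section

variable {S : Type*} (π : S → ℝ) (α : ℕ → S → ℝ) (k : ℕ)

def stageWeight (x : S) : ℝ :=
  π x * ∏ i ∈ Ico 1 k, (1 - α i x)

variable {π α k}

theorem stageWeight_pos {x : S} (hπ : 0 < π x) (hα : ∀ i ∈ Ico 1 k, α i x < 1) :
    0 < stageWeight π α k x :=
  mul_pos hπ (prod_pos fun i hi => sub_pos.mpr (hα i hi))

theorem div_mul_prod_div_eq_stageWeight_div (u v : S) :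
    π u / π v * ∏ i ∈ Ico 1 k, (1 - α i u) / (1 - α i v) =
      stageWeight π α k u / stageWeight π α k v := by
  rw [prod_div_distrib, div_mul_div_comm, stageWeight, stageWeight]

end

theorem delayed_rejection_kth_stage_balance_general {S : Type*}
    (F : ℕ → S → S) (hF : ∀ i, F i ∘ F i = id)
    (π : S → ℝ) (hπ : ∀ x, 0 < π x)
    (α : ℕ → S → ℝ)
    (hα : ∀ k x, α k x =
      min 1 ((π (F k x) / π x) *
        ∏ i ∈ Finset.Ico 1 k, (1 - α i (F k x)) / (1 - α i x)))
    (k : ℕ) (x : S)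
    (hlt : ∀ i ∈ Finset.Ico 1 k, α i x < 1 ∧ α i (F k x) < 1) :
    π x * (∏ i ∈ Finset.Ico 1 k, (1 - α i x)) * α k x
      = π (F k x) * (∏ i ∈ Finset.Ico 1 k, (1 - α i (F k x))) * α k (F k x) := by
  have hFF : F k (F k x) = x := congrFun (hF k) x
  have hαx : α k x = min 1 (stageWeight π α k (F k x) / stageWeight π α k x) := by
    rw [hα, div_mul_prod_div_eq_stageWeight_div]
  have hαFx : α k (F k x) = min 1 (stageWeight π α k x / stageWeight π α k (F k x)) := by
    rw [hα, hFF, div_mul_prod_div_eq_stageWeight_div]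
  change stageWeight π α k x * α k x = stageWeight π α k (F k x) * α k (F k x)
  rw [hαx, hαFx]
  exact mul_min_one_div_comm (stageWeight_pos (hπ x) fun i hi => (hlt i hi).1)
    (stageWeight_pos (hπ (F k x)) fun i hi => (hlt i hi).2)

/-- k-th stage delayed rejection balance condition for DR-G-HMC: with involutions
F₁, …, F_k, strictly positive density π, and recursively defined acceptance
probabilities α_i, the k-th stage balance condition holds. -/
theorem delayed_rejection_kth_stage_balance {S : Type*}
    (F : ℕ → S → S) (hF : ∀ i, F i ∘ F i = id)
    (π : S → ℝ) (hπ : ∀ x, 0 < π x)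
    (α : ℕ → S → ℝ)
    (hα : ∀ k x, α k x =
      min 1 ((π (F k x) / π x) *
        ∏ i ∈ Finset.Ico 1 k, (1 - α i (F k x)) / (1 - α i x)))
    (k : ℕ) (hk : 1 ≤ k) (x : S)
    (hlt : ∀ i ∈ Finset.Ico 1 k, α i x < 1 ∧ α i (F k x) < 1) :
    π x * (∏ i ∈ Finset.Ico 1 k, (1 - α i x)) * α k x
      = π (F k x) * (∏ i ∈ Finset.Ico 1 k, (1 - α i (F k x))) * α k (F k x) :=
  delayed_rejection_kth_stage_balance_general F hF π hπ α hα k x hlt
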